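/- Let α ∈ ℂ with α² ∉ {0, −4, 50}, and let f(x,y) = x⁶ + αx³y³ − y⁶ ∈ ℂ[x,y]. Then the set of matrices γ = [[a,b],[c,d]] ∈ SL(2,ℂ) for which there exists c₀ ∈ ℂ, c₀ ≠ 0, with f(ax+by, cx+dy) = c₀·f(x,y) has exactly 12 elements. -/

import Mathlib

open MvPolynomial

/-- The binary sextic `f_α = x⁶ + αx³y³ − y⁶`. -/
noncomputable def sexticQ12 (α : ℂ) : MvPolynomial (Fin 2) ℂ :=
  X 0 ^ 6 + C α * X 0 ^ 3 * X 1 ^ 3 - X 1 ^ 6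

/-!
Comparing coefficients in `f(ax + by, cx + dy) = c₀ f(x, y)` and eliminating gives
`(α² - 50)(ac)² = 0`. Precomposing with `(x, y) ↦ (y, -x)`, which negates `f`, turns this into
`(α² - 50)(bd)² = 0`. Hence `γ` is diagonal or antidiagonal, and evaluating
at `(1, 0)`, `(0, 1)`, `(1, 1)` (where `α ≠ 0` forces `c₀ = ±1`) leaves `diag(ζ, ζ⁵)` and
`[[0, -ζ⁵], [ζ, 0]]` with `ζ⁶ = 1`: the twelve elements of the binary dihedral group.
-/

def sexticFun (α x y : ℂ) : ℂ := x ^ 6 + α * x ^ 3 * y ^ 3 - y ^ 6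

lemma aeval_sexticQ12_eq_C_mul_iff (α a b c d c₀ : ℂ) :
    aeval ![C a * X 0 + C b * X 1, C c * X 0 + C d * X 1] (sexticQ12 α) = C c₀ * sexticQ12 α ↔
      ∀ x y, sexticFun α (a * x + b * y) (c * x + d * y) = c₀ * sexticFun α x y := by
  rw [MvPolynomial.funext_iff]
  simp [sexticQ12, sexticFun, Fin.forall_fin_succ_pi]

section
variable {α a b c d c₀ : ℂ}

lemma sexticFun_rotate
    (hs : ∀ x y, sexticFun α (a * x + b * y) (c * x + d * y) = c₀ * sexticFun α x y) (x y : ℂ) :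
    sexticFun α (-b * x + a * y) (-d * x + c * y) = -c₀ * sexticFun α x y := by
  have h := hs y (-x)
  unfold sexticFun at h ⊢
  linear_combination h

lemma mul_eq_zero_of_sexticFun (hα : α ^ 2 ≠ 50) (hdet : a * d - b * c = 1)
    (hs : ∀ x y, sexticFun α (a * x + b * y) (c * x + d * y) = c₀ * sexticFun α x y) :
    a * c = 0 := by
  unfold sexticFun at hs
  -- The coefficients of `x⁵y, x⁴y², x³y³, x²y⁴`, by Lagrange interpolation at `(1, 0)` and at
  -- `(t, 1)`, `t ∈ {0, ±1, ±2, 3}`.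
  have e1 : 6*a^5*b + α*(3*a^2*b*c^3 + 3*a^3*c^2*d) - 6*c^5*d = 0 := by
    linear_combination (1/12)*(hs 1 1) + (1/24)*(hs (-1) 1) + (-1/24)*(hs 2 1) +
      (-1/120)*(hs (-2) 1) + (1/120)*(hs 3 1) + (-3 : ℂ)*(hs 1 0) + (-1/12)*(hs 0 1)
  have e2 : 15*a^4*b^2 + α*(3*a*b^2*c^3 + 9*a^2*b*c^2*d + 3*a^3*c*d^2) - 15*c^4*d^2 = 0 := by
    linear_combination (-1/6)*(hs 1 1) + (-1/6)*(hs (-1) 1) + (1/24)*(hs 2 1) +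
      (1/24)*(hs (-2) 1) + (-5 : ℂ)*(hs 1 0) + (1/4)*(hs 0 1)
  have e3 : 20*a^3*b^3 + α*(b^3*c^3 + 9*a*b^2*c^2*d + 9*a^2*b*c*d^2 + a^3*d^3) - 20*c^3*d^3
      = c₀*α := by
    linear_combination (-7/12)*(hs 1 1) + (-1/24)*(hs (-1) 1) + (7/24)*(hs 2 1) +
      (-1/24)*(hs (-2) 1) + (-1/24)*(hs 3 1) + (15 : ℂ)*(hs 1 0) + (5/12)*(hs 0 1)
  have e4 : 15*a^2*b^4 + α*(3*b^3*c^2*d + 9*a*b^2*c*d^2 + 3*a^2*b*d^3) - 15*c^2*d^4 = 0 := by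
    linear_combination (2/3)*(hs 1 1) + (2/3)*(hs (-1) 1) + (-1/24)*(hs 2 1) +
      (-1/24)*(hs (-2) 1) + (4 : ℂ)*(hs 1 0) + (-5/4)*(hs 0 1)
  -- A syzygy among `e1, …, e4`; its factor `α² - 50` is the source of the exceptional value.
  have key : (α^2 - 50) * (a*c)^2 * (a*d - b*c)^4 = 0 := by
    linear_combination (10/3)*(a^6 + α*a^3*c^3 - c^6)*e4 -
      (5/3)*(6*a^5*b + α*(3*a^2*b*c^3 + 3*a^3*c^2*d) - 6*c^5*d)*e3 -
      (5/3)*c₀*α*e1 +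
      (2/3)*(15*a^4*b^2 + α*(3*a*b^2*c^3 + 9*a^2*b*c^2*d + 3*a^3*c*d^2) - 15*c^4*d^2)*e2
  simpa [hdet, sub_eq_zero, hα] using key

lemma diagonal_of_sexticFun (hα : α ≠ 0) (hb : b = 0) (hc : c = 0)
    (hdet : a * d - b * c = 1)
    (hs : ∀ x y, sexticFun α (a * x + b * y) (c * x + d * y) = c₀ * sexticFun α x y) :
    a ^ 6 = 1 ∧ d = a ^ 5 := by
  subst hb hc
  have h10 := hs 1 0
  have h01 := hs 0 1
  have h11 := hs 1 1
  unfold sexticFun at h10 h01 h11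
  have hc₀ : α * (c₀ - 1) = 0 := by
    linear_combination (a^2*d^2 + a*d + 1) * α * hdet + h10 + h01 - h11
  have ha : a ^ 6 = 1 := by
    linear_combination h10 + (mul_eq_zero.1 hc₀).resolve_left hα
  exact ⟨ha, by linear_combination a^5 * hdet - d * ha⟩

lemma antidiagonal_of_sexticFun (hα : α ≠ 0) (ha : a = 0) (hd : d = 0)
    (hdet : a * d - b * c = 1)
    (hs : ∀ x y, sexticFun α (a * x + b * y) (c * x + d * y) = c₀ * sexticFun α x y) :
    c ^ 6 = 1 ∧ b = -c ^ 5 := by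
  subst ha hd
  have h10 := hs 1 0
  have h01 := hs 0 1
  have h11 := hs 1 1
  unfold sexticFun at h10 h01 h11
  have hc₀ : α * (c₀ + 1) = 0 := by
    linear_combination -(b^2*c^2 - b*c + 1) * α * hdet + h10 + h01 - h11
  have hc : c ^ 6 = 1 := by
    linear_combination -h10 - (mul_eq_zero.1 hc₀).resolve_left hα
  exact ⟨hc, by linear_combination -c^5 * hdet - b * hc⟩

theorem exists_sexticFun_eq_iff (hα0 : α ≠ 0) (hα50 : α ^ 2 ≠ 50) (hdet : a * d - b * c = 1) :
    (∃ c₀, c₀ ≠ 0 ∧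
        ∀ x y, sexticFun α (a * x + b * y) (c * x + d * y) = c₀ * sexticFun α x y) ↔
      (b = 0 ∧ c = 0 ∧ a ^ 6 = 1 ∧ d = a ^ 5) ∨
        (a = 0 ∧ d = 0 ∧ c ^ 6 = 1 ∧ b = -c ^ 5) := by
  constructor
  · rintro ⟨c₀, -, hs⟩
    have hac := mul_eq_zero_of_sexticFun hα50 hdet hs
    have hbd : b * d = 0 := by
      have := mul_eq_zero_of_sexticFun hα50 (by linear_combination hdet) (sexticFun_rotate hs)
      linear_combination this
    by_cases ha : a = 0
    · have hb : b ≠ 0 := by rintro rfl; simp [ha] at hdet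
      have hd := (mul_eq_zero.1 hbd).resolve_left hb
      exact Or.inr ⟨ha, hd, antidiagonal_of_sexticFun hα0 ha hd hdet hs⟩
    · have hc := (mul_eq_zero.1 hac).resolve_left ha
      have hd : d ≠ 0 := by rintro rfl; simp [hc] at hdet
      have hb := (mul_eq_zero.1 hbd).resolve_right hd
      exact Or.inl ⟨hb, hc, diagonal_of_sexticFun hα0 hb hc hdet hs⟩
  · rintro (⟨rfl, rfl, ha, rfl⟩ | ⟨rfl, rfl, hc, rfl⟩)
    · refine ⟨1, one_ne_zero, fun x y => ?_⟩
      unfold sexticFun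
      linear_combination (x^6 + α*x^3*y^3*(a^12+a^6+1) - y^6*(a^24+a^18+a^12+a^6+1)) * ha
    · refine ⟨-1, by norm_num, fun x y => ?_⟩
      unfold sexticFun
      linear_combination (-x^6 - α*x^3*y^3*(c^12+c^6+1) + y^6*(c^24+c^18+c^12+c^6+1)) * hc

end

def binaryDihedral12 : Set (Matrix (Fin 2) (Fin 2) ℂ) :=
  (fun z => !![z, 0; 0, z ^ 5]) '' {z | z ^ 6 = 1} ∪
    (fun z => !![0, -z ^ 5; z, 0]) '' {z | z ^ 6 = 1}

lemma mem_binaryDihedral12_iff (M : Matrix (Fin 2) (Fin 2) ℂ) :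
    M ∈ binaryDihedral12 ↔
      (M 0 1 = 0 ∧ M 1 0 = 0 ∧ M 0 0 ^ 6 = 1 ∧ M 1 1 = M 0 0 ^ 5) ∨
        (M 0 0 = 0 ∧ M 1 1 = 0 ∧ M 1 0 ^ 6 = 1 ∧ M 0 1 = -M 1 0 ^ 5) := by
  constructor
  · rintro (⟨z, hz, rfl⟩ | ⟨z, hz, rfl⟩) <;> simp_all
  · rintro (⟨h01, h10, h6, h11⟩ | ⟨h00, h11, h6, h01⟩)
    · refine Or.inl ⟨M 0 0, h6, ?_⟩
      ext i j; fin_cases i <;> fin_cases j <;> simp [*]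
    · refine Or.inr ⟨M 1 0, h6, ?_⟩
      ext i j; fin_cases i <;> fin_cases j <;> simp [*]

lemma binaryDihedral12_subset_range_coe :
    binaryDihedral12 ⊆ Set.range ((↑) : Matrix.SpecialLinearGroup (Fin 2) ℂ → _) := by
  rintro M (⟨z, hz, rfl⟩ | ⟨z, hz, rfl⟩) <;>
    exact ⟨⟨_, by rw [Matrix.det_fin_two_of]; linear_combination hz.out⟩, rfl⟩

lemma ncard_setOf_pow_eq_one {n : ℕ} (hn : n ≠ 0) : {z : ℂ | z ^ n = 1}.ncard = n := by
  have h : {z : ℂ | z ^ n = 1} = ↑(Polynomial.nthRootsFinset n (1 : ℂ)) := by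
    ext z; simp [Polynomial.mem_nthRootsFinset (Nat.pos_of_ne_zero hn)]
  rw [h, Set.ncard_coe_finset, (Complex.isPrimitiveRoot_exp n hn).card_nthRootsFinset]

lemma ncard_binaryDihedral12 : binaryDihedral12.ncard = 12 := by
  have hfin : {z : ℂ | z ^ 6 = 1}.Finite :=
    Set.finite_of_ncard_ne_zero (by rw [ncard_setOf_pow_eq_one] <;> norm_num)
  have hdisj : Disjoint ((fun z : ℂ => !![z, 0; 0, z ^ 5]) '' {z | z ^ 6 = 1})
      ((fun z => !![0, -z ^ 5; z, 0]) '' {z | z ^ 6 = 1}) := by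
    rw [Set.disjoint_left]
    rintro _ ⟨z, hz, rfl⟩ ⟨w, -, hw⟩
    have hz0 : 0 = z := by simpa using congrFun (congrFun hw 0) 0
    simp [← hz0] at hz
  have hdiag : Function.Injective fun z : ℂ => !![z, 0; 0, z ^ 5] :=
    fun z w h => by simpa using congrFun (congrFun h 0) 0
  have hanti : Function.Injective fun z : ℂ => !![0, -z ^ 5; z, 0] :=
    fun z w h => by simpa using congrFun (congrFun h 1) 0
  rw [binaryDihedral12, Set.ncard_union_eq hdisj (hfin.image _) (hfin.image _),
    Set.ncard_image_of_injective _ hdiag, Set.ncard_image_of_injective _ hanti,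
    ncard_setOf_pow_eq_one (by norm_num)]

/-- For `α² ∉ {0, −4, 50}`, the set of `γ ∈ SL(2,ℂ)` carrying
`f = x⁶+αx³y³−y⁶` to a nonzero multiple of itself has exactly 12 elements. -/
theorem card_stabilizer_sexticQ12 (α : ℂ) (hα : α ^ 2 ∉ ({0, -4, 50} : Set ℂ)) :
    {γ : Matrix.SpecialLinearGroup (Fin 2) ℂ |
        ∃ c₀ : ℂ, c₀ ≠ 0 ∧
          aeval ![C ((γ : Matrix (Fin 2) (Fin 2) ℂ) 0 0) * X 0 +
                   C ((γ : Matrix (Fin 2) (Fin 2) ℂ) 0 1) * X 1,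
                  C ((γ : Matrix (Fin 2) (Fin 2) ℂ) 1 0) * X 0 +
                   C ((γ : Matrix (Fin 2) (Fin 2) ℂ) 1 1) * X 1]
            (sexticQ12 α) = C c₀ * sexticQ12 α}.ncard = 12 := by
  have hα0 : α ≠ 0 := by rintro rfl; exact hα (by norm_num)
  have hα50 : α ^ 2 ≠ 50 := fun h => hα (by simp [h])
  rw [← ncard_binaryDihedral12, ← Set.ncard_preimage_of_injective_subset_range
    Subtype.val_injective binaryDihedral12_subset_range_coe]
  congr 1
  ext γ
  have hdet : γ.1 0 0 * γ.1 1 1 - γ.1 0 1 * γ.1 1 0 = 1 := by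
    rw [← Matrix.det_fin_two]; exact γ.2
  simp only [Set.mem_ofPred_eq, aeval_sexticQ12_eq_C_mul_iff,
    exists_sexticFun_eq_iff hα0 hα50 hdet]
  exact (mem_binaryDihedral12_iff _).symm
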